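/- Let W_n be the wheel graph on n + 1 vertices (a hub joined to each of n rim vertices arranged in a cycle). Then the critical group satisfies Crit(W_n) ≅ ℤ/(F_{n−1} + F_{n+1}) × ℤ/(F_{n−1} + F_{n+1}) if n is odd, and Crit(W_n) ≅ ℤ/F_n × ℤ/(5F_n) if n is even, where F_k are the Fibonacci numbers. -/

import Mathlib

open Finsupp

/-- A graph with boundary (`∂`-graph) together with a generalized Laplacian datum over `R`:
oriented edges with a fixed-point-free reversal involution, local finiteness,
a set of boundary vertices, symmetric edge weights `w` and diagonal perturbation `d`. -/
structure DNetwork (R : Type) [CommRing R] where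
  V : Type
  E : Type
  src : E → V
  rev : E → E
  rev_rev : ∀ e, rev (rev e) = e
  rev_ne : ∀ e, rev e ≠ e
  finE : ∀ x : V, Fintype {e : E // src e = x}
  boundary : Set V
  w : E → R
  w_rev : ∀ e, w (rev e) = w e
  d : V → R

namespace DNetwork

variable {R : Type} [CommRing R] (N : DNetwork R)

/-- The endpoint of an oriented edge. -/
def tgt (e : N.E) : N.V := N.src (N.rev e)

/-- The generalized Laplacian evaluated at the vertex `x`, as a linear functional on
`M`-valued functions: `Lu(x) = d(x) u(x) + ∑_{e : e₊ = x} w(e) (u(x) - u(e₋))`. -/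
noncomputable def lapAt {M : Type} [AddCommGroup M] [Module R M] (x : N.V) :
    (N.V → M) →ₗ[R] M :=
  letI := N.finE x
  N.d x • (LinearMap.proj x : (N.V → M) →ₗ[R] M) +
    ∑ e : {e : N.E // N.src e = x},
      N.w e.1 • ((LinearMap.proj x : (N.V → M) →ₗ[R] M) - LinearMap.proj (N.tgt e.1))

/-- The generalized Laplacian applied to the basis chain at the vertex `x`. -/
noncomputable def lapSingle (x : N.V) : N.V →₀ R :=
  letI := N.finE x
  N.d x • Finsupp.single x 1 +
    ∑ e : {e : N.E // N.src e = x},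
      N.w e.1 • (Finsupp.single x 1 - Finsupp.single (N.tgt e.1) 1)

/-- The generalized Laplacian as a linear endomorphism of the module `RV` of `0`-chains. -/
noncomputable def chainLap : (N.V →₀ R) →ₗ[R] (N.V →₀ R) :=
  Finsupp.lsum R fun x => LinearMap.toSpanSingleton R _ (N.lapSingle x)

/-- The set of interior vertices. -/
def interior : Set N.V := N.boundaryᶜ

/-- The submodule `L(RV°)` of `RV`. -/
noncomputable def lapImage : Submodule R (N.V →₀ R) :=
  Submodule.map N.chainLap (Finsupp.supported R R N.interior)

/-- The fundamental module `Υ(G,L) = RV / L(RV°)`. -/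
abbrev Upsilon := (N.V →₀ R) ⧸ N.lapImage

/-- The submodule of `M`-valued harmonic functions `U(G,L,M)`. -/
noncomputable def harmonic (M : Type) [AddCommGroup M] [Module R M] :
    Submodule R (N.V → M) :=
  ⨅ x ∈ N.interior, LinearMap.ker (N.lapAt (M := M) x)

/-- The module `U₀(G,L,M)` of finitely supported `M`-valued functions `u` with
`u = 0` on the boundary and `Lu ≡ 0` everywhere. -/
noncomputable def U0 (M : Type) [AddCommGroup M] [Module R M] :
    Submodule R (N.V →₀ M) :=
  (⨅ x ∈ N.boundary, LinearMap.ker (Finsupp.lapply (M := M) (R := R) x)) ⊓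
    (⨅ x : N.V, LinearMap.ker ((N.lapAt (M := M) x).comp Finsupp.lcoeFun))

/-- Adjacency via an oriented edge. -/
def Adj (x y : N.V) : Prop := ∃ e : N.E, N.src e = x ∧ N.tgt e = y

/-- Connectivity of the underlying graph. -/
def Connected : Prop := ∀ x y : N.V, Relation.ReflTransGen N.Adj x y

end DNetwork

/-- The augmentation map `ε : ℤV → ℤ` summing coordinates. -/
noncomputable def epsMap (N : DNetwork ℤ) : (N.V →₀ ℤ) →ₗ[ℤ] ℤ :=
  Finsupp.lsum ℤ fun _ => LinearMap.id

/-- The wheel graph `W_n` on `n + 1` vertices (a hub `none` joined to each of the `n` rim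
vertices `some k`, the rim vertices arranged in a cycle `some k ∼ some (k+1)`), as a graph
without boundary with the standard Laplacian (all weights `1`, `d = 0`) over `ℤ`. -/
noncomputable def wheelNet (n : ℕ) [NeZero n] : DNetwork ℤ where
  V := Option (Fin n)
  E := (Fin n × Bool) ⊕ (Fin n × Bool)
  src := fun e => match e with
    | .inl (_, true) => none            -- spoke, oriented hub → rim
    | .inl (k, false) => some k         -- spoke, oriented rim → hub
    | .inr (k, true) => some k          -- rim edge, oriented k → k+1
    | .inr (k, false) => some (k + 1)   -- rim edge, oriented k+1 → k
  rev := fun e => match e with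
    | .inl (k, b) => .inl (k, !b)
    | .inr (k, b) => .inr (k, !b)
  rev_rev := by rintro (⟨k, b⟩ | ⟨k, b⟩) <;> simp
  rev_ne := by rintro (⟨k, b⟩ | ⟨k, b⟩) <;> simp
  finE := fun _ => Fintype.ofFinite _
  boundary := ∅
  w := fun _ => 1
  w_rev := fun _ => rfl
  d := fun _ => 0

/-- The critical group of the wheel graph: `Crit(W_n) = ker ε / im L_std`, realized as the
image of `ker ε` in `Υ = ℤV / L(ℤV)`. -/
noncomputable def wheelCrit (n : ℕ) [NeZero n] : Submodule ℤ (wheelNet n).Upsilon :=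
  Submodule.map (wheelNet n).lapImage.mkQ (LinearMap.ker (epsMap (wheelNet n)))

/-!
Let `y k` be the class of `v_k - hub` in `ℤV ⧸ L(ℤV)`; these classes generate `Crit(W_n)`.
The Laplacian at `v_k` gives `y (k + 1) = 3 y k - y (k - 1)`, indices mod `n`: the recurrence
of the even-indexed Fibonacci numbers, whose transfer matrix is `A²` for `A = !![1, 1; 1, 0]`.
Sending `y k` to the class of `A^(2k) e₀` identifies `Crit(W_n)` with the cokernel of
`A^(2n) - 1` on `ℤ²`. Now `A^(2n) - 1 = Aⁿ (Aⁿ - det(Aⁿ) adj(Aⁿ))` with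
`Aⁿ = !![F (n+1), F n; F n, F (n-1)]` and `det Aⁿ = (-1)ⁿ`, so up to unimodular factors it is
`diag(L n, L n)` for odd `n` (`L n = F (n-1) + F (n+1)`) and `F n • !![1, 2; 2, -1]`, of Smith
normal form `diag(F n, 5 F n)`, for even `n`.
-/

open scoped Matrix

namespace Matrix

variable {ι R : Type*} [Fintype ι] [DecidableEq ι] [CommRing R]

abbrev coker (X : Matrix ι ι R) : Type _ := (ι → R) ⧸ LinearMap.range X.mulVecLin

theorem mul_sub_det_smul_adjugate (X : Matrix ι ι R) :
    X * (X - X.det • X.adjugate) = X ^ 2 - X.det ^ 2 • 1 := by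
  rw [mul_sub, mul_smul_comm, mul_adjugate, smul_smul, sq, sq]

theorem range_mulVecLin_mul_mul {X D Y : Matrix ι ι R} (hY : IsUnit Y) :
    LinearMap.range (X * D * Y).mulVecLin = (LinearMap.range D.mulVecLin).map X.mulVecLin := by
  have hYs : Function.Surjective Y.mulVecLin := by
    intro v
    refine ⟨Y⁻¹ *ᵥ v, ?_⟩
    simp [mulVec_mulVec, mul_nonsing_inv _ ((isUnit_iff_isUnit_det Y).mp hY)]
  rw [Matrix.mulVecLin_mul, Matrix.mulVecLin_mul, LinearMap.range_comp_of_range_eq_top _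
    (LinearMap.range_eq_top.mpr hYs), LinearMap.range_comp]

noncomputable def cokerEquivOfIsUnit {X D Y Z : Matrix ι ι R} (hZ : Z = X * D * Y)
    (hX : IsUnit X) (hY : IsUnit Y) : Z.coker ≃ₗ[R] D.coker :=
  (Submodule.Quotient.equiv _ _ (X.toLinearEquiv' hX.invertible)
    (by rw [hZ, range_mulVecLin_mul_mul hY]; rfl)).symm

theorem coker_mk_pow_mulVec (X : Matrix ι ι R) (q : ℕ) (w : ι → R) :
    (Submodule.Quotient.mk (X ^ q *ᵥ w) : (X - 1).coker) = Submodule.Quotient.mk w := by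
  induction q with
  | zero => simp
  | succ q ih =>
    rw [← ih, pow_succ', ← mulVec_mulVec, Submodule.Quotient.eq]
    exact ⟨X ^ q *ᵥ w, by simp⟩

end Matrix

section DiagonalCoker

open Matrix

variable {ι : Type*}

noncomputable def piIntCastZMod (d : ι → ℕ) : (ι → ℤ) →ₗ[ℤ] (i : ι) → ZMod (d i) :=
  LinearMap.pi fun i => (Int.castAddHom (ZMod (d i))).toIntLinearMap ∘ₗ LinearMap.proj i

theorem piIntCastZMod_surjective (d : ι → ℕ) : Function.Surjective (piIntCastZMod d) := by
  intro z
  choose v hv using fun i => ZMod.intCast_surjective (z i)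
  exact ⟨v, funext hv⟩

variable [Fintype ι] [DecidableEq ι]

theorem ker_piIntCastZMod (d : ι → ℕ) :
    LinearMap.ker (piIntCastZMod d) = LinearMap.range (diagonal fun i => (d i : ℤ)).mulVecLin := by
  ext v
  simp only [LinearMap.mem_ker, LinearMap.mem_range, mulVecLin_apply, mulVec_diagonal,
    funext_iff, piIntCastZMod, LinearMap.pi_apply, LinearMap.comp_apply, LinearMap.proj_apply,
    AddMonoidHom.coe_toIntLinearMap, Int.coe_castAddHom, Pi.zero_apply,
    ZMod.intCast_zmod_eq_zero_iff_dvd]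
  constructor
  · intro h
    choose u hu using h
    exact ⟨u, fun i => (hu i).symm⟩
  · rintro ⟨u, hu⟩ i
    exact ⟨u i, (hu i).symm⟩

noncomputable def cokerDiagonalEquiv (d : ι → ℕ) :
    (diagonal fun i => (d i : ℤ)).coker ≃ₗ[ℤ] (i : ι) → ZMod (d i) :=
  (Submodule.quotEquivOfEq _ _ (ker_piIntCastZMod d).symm).trans
    ((piIntCastZMod d).quotKerEquivOfSurjective (piIntCastZMod_surjective d))

end DiagonalCoker

def fibMat : Matrix (Fin 2) (Fin 2) ℤ := !![1, 1; 1, 0]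

theorem fibMat_pow_succ (m : ℕ) :
    fibMat ^ (m + 1) = !![(Nat.fib (m + 2) : ℤ), Nat.fib (m + 1); Nat.fib (m + 1), Nat.fib m] := by
  induction m with
  | zero => simp [fibMat]
  | succ m ih =>
    rw [pow_succ, ih, fibMat]
    ext i j; fin_cases i <;> fin_cases j <;> simp [Nat.fib_add_two] <;> ring

theorem det_fibMat_pow (n : ℕ) : (fibMat ^ n).det = (-1) ^ n := by
  rw [Matrix.det_pow]; simp [fibMat, Matrix.det_fin_two_of]

theorem fibMat_pow_two_mul_sub_one (n : ℕ) :
    fibMat ^ (2 * n) - 1 = fibMat ^ n * (fibMat ^ n - (-1) ^ n • (fibMat ^ n).adjugate) := by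
  rw [← det_fibMat_pow, Matrix.mul_sub_det_smul_adjugate, det_fibMat_pow, ← pow_mul, ← pow_mul,
    mul_comm n 2, (even_two_mul n).neg_one_pow, one_smul]

theorem fibMat_pow_two_mul_sub_one_of_odd {n : ℕ} (hn : Odd n) :
    fibMat ^ (2 * n) - 1 =
      fibMat ^ n * Matrix.diagonal fun _ => ((Nat.fib (n - 1) + Nat.fib (n + 1) : ℕ) : ℤ) := by
  obtain ⟨m, rfl⟩ : ∃ m, n = m + 1 := ⟨n - 1, by have := hn.pos; omega⟩
  rw [fibMat_pow_two_mul_sub_one, hn.neg_one_pow, fibMat_pow_succ, Matrix.adjugate_fin_two_of]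
  congr 1
  ext i j; fin_cases i <;> fin_cases j <;> simp; ring

theorem fibMat_pow_two_mul_sub_one_of_even {n : ℕ} (hn : Even n) (hn0 : n ≠ 0) :
    fibMat ^ (2 * n) - 1 =
      fibMat ^ n * !![1, 0; 2, -1] *
        Matrix.diagonal (fun i => ((![Nat.fib n, 5 * Nat.fib n] i : ℕ) : ℤ)) * !![1, 2; 0, 1] := by
  obtain ⟨m, rfl⟩ : ∃ m, n = m + 1 := ⟨n - 1, by omega⟩
  rw [fibMat_pow_two_mul_sub_one, hn.neg_one_pow, fibMat_pow_succ, Matrix.adjugate_fin_two_of,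
    Matrix.mul_assoc, Matrix.mul_assoc]
  congr 1
  have h := Nat.fib_add_two (n := m)
  ext i j
  fin_cases i <;> fin_cases j <;> simp [Matrix.mul_apply, Fin.sum_univ_two] <;>
    push_cast [h] <;> ring

theorem isUnit_fibMat : IsUnit fibMat := by
  rw [Matrix.isUnit_iff_isUnit_det, fibMat, Matrix.det_fin_two_of]
  norm_num

theorem fibMat_pow_four : fibMat ^ 4 = 3 • fibMat ^ 2 - 1 := by
  rw [fibMat]; ext i j; fin_cases i <;> fin_cases j <;> simp [pow_succ]

def fibVec (j : ℕ) : Fin 2 → ℤ := fibMat ^ (2 * j) *ᵥ ![1, 0]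

theorem fibVec_add_two (j : ℕ) : fibVec (j + 2) = 3 • fibVec (j + 1) - fibVec j := by
  have h : fibMat ^ (2 * (j + 2)) = 3 • fibMat ^ (2 * (j + 1)) - fibMat ^ (2 * j) := by
    rw [show 2 * (j + 2) = 4 + 2 * j by ring, show 2 * (j + 1) = 2 + 2 * j by ring, pow_add,
      pow_add, fibMat_pow_four, sub_mul, smul_mul_assoc, one_mul]
  rw [fibVec, h, Matrix.sub_mulVec, Matrix.smul_mulVec]
  rfl

theorem fibMat_pow_mulVec_fibVec (m j : ℕ) : fibMat ^ (2 * m) *ᵥ fibVec j = fibVec (m + j) := by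
  rw [fibVec, fibVec, Matrix.mulVec_mulVec, ← pow_add, mul_add]

theorem eq_smul_fibVec_zero_add_smul_fibVec_one (v : Fin 2 → ℤ) :
    v = (v 0 - 2 * v 1) • fibVec 0 + v 1 • fibVec 1 := by
  ext i; fin_cases i <;> simp [fibVec, fibMat, sq]; ring

theorem linearMap_ext_fibVec {M : Type*} [AddCommGroup M] {f g : (Fin 2 → ℤ) →ₗ[ℤ] M}
    (h₀ : f (fibVec 0) = g (fibVec 0)) (h₁ : f (fibVec 1) = g (fibVec 1)) : f = g := by
  refine LinearMap.ext fun v => ?_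
  rw [eq_smul_fibVec_zero_add_smul_fibVec_one v, map_add, map_add, map_smul, map_smul,
    map_smul, map_smul, h₀, h₁]

namespace DNetwork

variable {R : Type} [CommRing R] (N : DNetwork R)

theorem lapSingle_eq_sum [Fintype N.E] [DecidableEq N.V] (x : N.V) :
    N.lapSingle x = N.d x • single x 1 +
      ∑ e, if N.src e = x then N.w e • (single x 1 - single (N.tgt e) 1) else 0 := by
  rw [lapSingle, ← Finset.sum_filter, Finset.sum_subtype (F := N.finE x) _ (by simp)]

theorem chainLap_eq_linearCombination : N.chainLap = linearCombination R N.lapSingle := by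
  ext x : 2
  simp [chainLap]

theorem lapImage_eq_span (h : N.boundary = ∅) :
    N.lapImage = Submodule.span R (Set.range N.lapSingle) := by
  rw [lapImage, interior, h, Set.compl_empty, supported_univ, Submodule.map_top,
    chainLap_eq_linearCombination, range_linearCombination]

end DNetwork

theorem ker_epsMap (N : DNetwork ℤ) (v₀ : N.V) :
    LinearMap.ker (epsMap N) = Submodule.span ℤ (Set.range fun v => single v 1 - single v₀ 1) := by
  apply le_antisymm
  · intro c hc
    have hsum : c.sum (fun v a => a • (single v 1 - single v₀ 1)) = c := by
      have hε : c.sum (fun _ a => a) = 0 := hc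
      simp only [smul_sub, smul_single_one, Finsupp.sum_sub, ← single_sum, hε, single_zero,
        sub_zero, sum_single]
    rw [← hsum]
    exact Submodule.finsuppSum_mem _ _ _ _ fun v _ =>
      Submodule.smul_mem _ _ (Submodule.subset_span ⟨v, rfl⟩)
  · rw [Submodule.span_le]
    rintro _ ⟨v, rfl⟩
    simp [epsMap, sum_sub_index]

namespace Wheel

open DNetwork Fin.NatCast

variable {n : ℕ} [NeZero n]

instance : Fintype (wheelNet n).E :=
  inferInstanceAs (Fintype ((Fin n × Bool) ⊕ (Fin n × Bool)))

instance : DecidableEq (wheelNet n).V := inferInstanceAs (DecidableEq (Option (Fin n)))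

def hub : (wheelNet n).V := none

def rim (k : Fin n) : (wheelNet n).V := Option.some k

def spoke (k : Fin n) (b : Bool) : (wheelNet n).E := .inl (k, b)

def cycleEdge (k : Fin n) (b : Bool) : (wheelNet n).E := .inr (k, b)

theorem sum_edges {M : Type*} [AddCommMonoid M] (f : (wheelNet n).E → M) :
    ∑ e, f e = ∑ k, ∑ b, (f (spoke k b) + f (cycleEdge k b)) := by
  simp only [Finset.sum_add_distrib, ← Fintype.sum_prod_type']
  exact Fintype.sum_sum_type f

@[simp] theorem src_spoke (k : Fin n) (b : Bool) :
    (wheelNet n).src (spoke k b) = if b then hub else rim k := by cases b <;> rfl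

@[simp] theorem tgt_spoke (k : Fin n) (b : Bool) :
    (wheelNet n).tgt (spoke k b) = if b then rim k else hub := by cases b <;> rfl

@[simp] theorem src_cycleEdge (k : Fin n) (b : Bool) :
    (wheelNet n).src (cycleEdge k b) = if b then rim k else rim (k + 1) := by cases b <;> rfl

@[simp] theorem tgt_cycleEdge (k : Fin n) (b : Bool) :
    (wheelNet n).tgt (cycleEdge k b) = if b then rim (k + 1) else rim k := by cases b <;> rfl

@[simp] theorem wheelNet_w (e : (wheelNet n).E) : (wheelNet n).w e = 1 := rfl

@[simp] theorem wheelNet_d (v : (wheelNet n).V) : (wheelNet n).d v = 0 := rfl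

theorem rim_injective : Function.Injective (rim (n := n)) := Option.some_injective _

@[simp] theorem rim_ne_hub (k : Fin n) : rim k ≠ hub := Option.some_ne_none k

@[simp] theorem hub_ne_rim (k : Fin n) : hub ≠ rim k := (rim_ne_hub k).symm

theorem lapSingle_hub :
    (wheelNet n).lapSingle hub = ∑ k, (single hub 1 - single (rim k) 1) := by
  rw [DNetwork.lapSingle_eq_sum, sum_edges]
  simp

theorem lapSingle_rim (k : Fin n) :
    (wheelNet n).lapSingle (rim k) = (single (rim k) 1 - single hub 1) +
      (single (rim k) 1 - single (rim (k + 1)) 1) +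
      (single (rim k) 1 - single (rim (k - 1)) 1) := by
  rw [DNetwork.lapSingle_eq_sum, sum_edges]
  simp [rim_injective.eq_iff, Finset.sum_add_distrib, ← eq_sub_iff_add_eq]

noncomputable def rimClass (k : Fin n) : (wheelNet n).Upsilon :=
  Submodule.Quotient.mk (single (rim k) 1 - single hub 1)

theorem wheelCrit_eq_span : wheelCrit n = Submodule.span ℤ (Set.range rimClass) := by
  rw [wheelCrit, ker_epsMap _ hub, Submodule.map_span, ← Set.range_comp]
  apply le_antisymm <;> rw [Submodule.span_le]
  · rintro _ ⟨v | k, rfl⟩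
    · change (wheelNet n).lapImage.mkQ (single hub 1 - single hub 1) ∈ _
      simp
    · exact Submodule.subset_span ⟨k, rfl⟩
  · rintro _ ⟨k, rfl⟩
    exact Submodule.subset_span ⟨rim k, rfl⟩

theorem rimClass_add_one (k : Fin n) :
    rimClass (k + 1) = 3 • rimClass k - rimClass (k - 1) := by
  have h : (wheelNet n).lapSingle (rim k) ∈ (wheelNet n).lapImage := by
    rw [lapImage_eq_span _ rfl]
    exact Submodule.subset_span ⟨rim k, rfl⟩
  rw [← sub_eq_zero, ← neg_eq_zero]
  simp only [rimClass, ← Submodule.Quotient.mk_smul, ← Submodule.Quotient.mk_sub,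
    ← Submodule.Quotient.mk_neg, Submodule.Quotient.mk_eq_zero]
  convert h using 1
  rw [lapSingle_rim]
  module

-- Determined by `fibVec 0 = ![1, 0] ↦ rimClass 0` and `fibVec 1 = ![2, 1] ↦ rimClass 1`.
noncomputable def ofCoords : (Fin 2 → ℤ) →ₗ[ℤ] (wheelNet n).Upsilon :=
  Fintype.linearCombination ℤ ![rimClass 0, rimClass 1 - 2 • rimClass 0]

theorem ofCoords_fibVec (j : ℕ) : ofCoords (fibVec j) = rimClass (j : Fin n) := by
  induction j using Nat.twoStepInduction with
  | zero => simp [ofCoords, fibVec, Fintype.linearCombination_apply]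
  | one =>
    simp [ofCoords, fibVec, Fintype.linearCombination_apply, fibMat, sq]
    abel
  | more j ih₀ ih₁ =>
    have h := rimClass_add_one ((j + 1 : ℕ) : Fin n)
    push_cast at h ih₁ ⊢
    rw [add_sub_cancel_right, add_assoc, one_add_one_eq_two] at h
    rw [fibVec_add_two, map_sub, map_nsmul, ih₀, ih₁, h]

theorem ofCoords_fibMat_pow_mulVec (v : Fin 2 → ℤ) :
    ofCoords (fibMat ^ (2 * n) *ᵥ v) = ofCoords (n := n) v := by
  have h : ofCoords ∘ₗ (fibMat ^ (2 * n)).mulVecLin = ofCoords (n := n) :=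
    linearMap_ext_fibVec
      (by rw [LinearMap.comp_apply, Matrix.mulVecLin_apply, fibMat_pow_mulVec_fibVec,
        ofCoords_fibVec, ofCoords_fibVec]; simp)
      (by rw [LinearMap.comp_apply, Matrix.mulVecLin_apply, fibMat_pow_mulVec_fibVec,
        ofCoords_fibVec, ofCoords_fibVec]; simp)
  exact LinearMap.congr_fun h v

noncomputable def cokerToUpsilon : (fibMat ^ (2 * n) - 1).coker →ₗ[ℤ] (wheelNet n).Upsilon :=
  Submodule.liftQ _ ofCoords <| by
    rintro _ ⟨v, rfl⟩
    rw [LinearMap.mem_ker, Matrix.mulVecLin_apply, Matrix.sub_mulVec, map_sub,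
      ofCoords_fibMat_pow_mulVec, Matrix.one_mulVec, sub_self]

noncomputable def ofChain : ((wheelNet n).V →₀ ℤ) →ₗ[ℤ] (fibMat ^ (2 * n) - 1).coker :=
  linearCombination ℤ fun v => Option.elim v 0 fun k => Submodule.Quotient.mk (fibVec k.val)

theorem ofChain_single_hub : ofChain (single hub 1) = (0 : (fibMat ^ (2 * n) - 1).coker) := by
  rw [ofChain, linearCombination_single, one_smul]
  rfl

theorem ofChain_single_rim (j : ℕ) :
    ofChain (single (rim (j : Fin n)) 1) = Submodule.Quotient.mk (fibVec j) := by
  rw [ofChain, linearCombination_single, one_smul]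
  change Submodule.Quotient.mk (fibVec (j % n)) = _
  have h := Matrix.coker_mk_pow_mulVec (fibMat ^ (2 * n)) (j / n) (fibVec (j % n))
  rw [← pow_mul, mul_assoc, fibMat_pow_mulVec_fibVec, Nat.div_add_mod] at h
  exact h.symm

theorem lapSingle_hub_eq_neg_sum :
    (wheelNet n).lapSingle hub = -∑ k, (wheelNet n).lapSingle (rim k) := by
  have hsucc : ∑ k, (single (rim k) 1 - single (rim (k + 1)) 1 : (wheelNet n).V →₀ ℤ) = 0 := by
    rw [Finset.sum_sub_distrib, sub_eq_zero]
    exact (Equiv.sum_comp (Equiv.addRight (1 : Fin n)) fun k => single (rim k) 1).symm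
  have hpred : ∑ k, (single (rim k) 1 - single (rim (k - 1)) 1 : (wheelNet n).V →₀ ℤ) = 0 := by
    rw [Finset.sum_sub_distrib, sub_eq_zero]
    exact (Equiv.sum_comp (Equiv.subRight (1 : Fin n)) fun k => single (rim k) 1).symm
  simp only [lapSingle_rim, lapSingle_hub, Finset.sum_add_distrib, hsucc, hpred, add_zero,
    ← Finset.sum_neg_distrib, neg_sub]

theorem ofChain_lapSingle_rim (k : Fin n) : ofChain ((wheelNet n).lapSingle (rim k)) = 0 := by
  obtain ⟨i, rfl⟩ : ∃ i : ℕ, ((i + 1 : ℕ) : Fin n) = k := ⟨(k - 1).val, by simp⟩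
  have hsucc : ((i + 1 : ℕ) : Fin n) + 1 = ((i + 2 : ℕ) : Fin n) := by
    push_cast; rw [add_assoc, one_add_one_eq_two]
  have hpred : ((i + 1 : ℕ) : Fin n) - 1 = (i : Fin n) := by
    push_cast; rw [add_sub_cancel_right]
  rw [lapSingle_rim, hsucc, hpred]
  simp only [map_add, map_sub, ofChain_single_rim, ofChain_single_hub, fibVec_add_two,
    Submodule.Quotient.mk_sub, Submodule.Quotient.mk_smul]
  abel

theorem ofChain_lapSingle (v : (wheelNet n).V) : ofChain ((wheelNet n).lapSingle v) = 0 := by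
  rcases v with _ | k
  · rw [show none = hub from rfl, lapSingle_hub_eq_neg_sum, map_neg, map_sum]
    simp only [ofChain_lapSingle_rim, Finset.sum_const_zero, neg_zero]
  · exact ofChain_lapSingle_rim k

noncomputable def upsilonToCoker : (wheelNet n).Upsilon →ₗ[ℤ] (fibMat ^ (2 * n) - 1).coker :=
  (wheelNet n).lapImage.liftQ ofChain <| by
    rw [lapImage_eq_span _ rfl, Submodule.span_le]
    rintro _ ⟨v, rfl⟩
    exact ofChain_lapSingle v

theorem upsilonToCoker_rimClass (j : ℕ) :
    upsilonToCoker (rimClass (j : Fin n)) = Submodule.Quotient.mk (fibVec j) := by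
  rw [rimClass, upsilonToCoker, Submodule.liftQ_apply, map_sub, ofChain_single_rim,
    ofChain_single_hub, sub_zero]

theorem upsilonToCoker_comp_cokerToUpsilon :
    upsilonToCoker ∘ₗ cokerToUpsilon (n := n) = LinearMap.id :=
  Submodule.linearMap_qext _ <| linearMap_ext_fibVec
    (by simpa [cokerToUpsilon, ofCoords_fibVec] using upsilonToCoker_rimClass (n := n) 0)
    (by simpa [cokerToUpsilon, ofCoords_fibVec] using upsilonToCoker_rimClass (n := n) 1)

theorem range_cokerToUpsilon : LinearMap.range (cokerToUpsilon (n := n)) = wheelCrit n := by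
  rw [cokerToUpsilon, Submodule.range_liftQ, wheelCrit_eq_span]
  apply le_antisymm
  · rintro _ ⟨v, rfl⟩
    rw [eq_smul_fibVec_zero_add_smul_fibVec_one v, map_add, map_smul, map_smul,
      ofCoords_fibVec, ofCoords_fibVec]
    exact add_mem (Submodule.smul_mem _ _ (Submodule.subset_span ⟨_, rfl⟩))
      (Submodule.smul_mem _ _ (Submodule.subset_span ⟨_, rfl⟩))
  · rw [Submodule.span_le]
    rintro _ ⟨k, rfl⟩
    exact ⟨fibVec k.val, by rw [ofCoords_fibVec, Fin.cast_val_eq_self]⟩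

noncomputable def critEquivCoker : wheelCrit n ≃ₗ[ℤ] (fibMat ^ (2 * n) - 1).coker :=
  ((LinearEquiv.ofLeftInverse (g := upsilonToCoker)
    (LinearMap.congr_fun upsilonToCoker_comp_cokerToUpsilon)).trans
      (LinearEquiv.ofEq _ _ range_cokerToUpsilon)).symm

end Wheel

/-- for odd `n`, `Crit(W_n) ≅ ℤ/(F_{n-1}+F_{n+1}) × ℤ/(F_{n-1}+F_{n+1})`, and
for even `n`, `Crit(W_n) ≅ ℤ/F_n × ℤ/(5 F_n)`. -/
theorem crit_wheel (n : ℕ) [NeZero n] :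
    (Odd n → Nonempty (↥(wheelCrit n) ≃ₗ[ℤ]
        (ZMod (Nat.fib (n - 1) + Nat.fib (n + 1)) ×
          ZMod (Nat.fib (n - 1) + Nat.fib (n + 1))))) ∧
      (Even n → Nonempty (↥(wheelCrit n) ≃ₗ[ℤ]
        (ZMod (Nat.fib n) × ZMod (5 * Nat.fib n)))) := by
  refine ⟨fun hn => ⟨?_⟩, fun hn => ⟨?_⟩⟩
  · exact Wheel.critEquivCoker ≪≫ₗ
      Matrix.cokerEquivOfIsUnit
        (by rw [Matrix.mul_one]; exact fibMat_pow_two_mul_sub_one_of_odd hn)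
        (isUnit_fibMat.pow n) isUnit_one ≪≫ₗ
      cokerDiagonalEquiv _ ≪≫ₗ LinearEquiv.piFinTwo ℤ _
  · exact Wheel.critEquivCoker ≪≫ₗ
      Matrix.cokerEquivOfIsUnit (fibMat_pow_two_mul_sub_one_of_even hn (NeZero.ne n))
        ((isUnit_fibMat.pow n).mul (by simp [Matrix.isUnit_iff_isUnit_det]))
        (by simp [Matrix.isUnit_iff_isUnit_det]) ≪≫ₗ
      cokerDiagonalEquiv ![Nat.fib n, 5 * Nat.fib n] ≪≫ₗ LinearEquiv.piFinTwo ℤ _
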